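/- arXiv:1307.2140 — 5 statements merged into one kernel-verified Lean document; each statement's English description precedes it below -/
import Mathlib

section
/- Let V be a finite-dimensional vector space and N : V → V nilpotent. If W_• and W'_• are two increasing filtrations of V, each satisfying N(W_k) ⊆ W_{k-2} and inducing isomorphisms N^k : Gr^W_k V ≅ Gr^W_{-k} V for all k ≥ 0, then W_k = W'_k for all k. That is, the monodromy filtration of a nilpotent endomorphism is unique. -/
/-!
Both filtrations are pinned down from the outside in. If `N ^ n = 0`, the isomorphisms
`N ^ k : Gr_k ≅ Gr_{-k}` for `k ≥ n` force every filtration to be `⊤` in degrees `≥ n` and `⊥` in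
degrees `≤ -n`. Going inwards, `W m ≤ W' m` follows from the injectivity of `N ^ (m + 1)` on
`Gr'_{m+1}`, since `N ^ (m + 1)` moves `W m` into `W (-m - 2)`; then `W (-m) ≤ W' (-m)` follows
from the surjectivity of `N ^ m : Gr_m → Gr_{-m}`.
-/

open Submodule

/-- An increasing filtration `W` on `V`, exhaustive and separated, such that
`N (W k) ⊆ W (k-2)` and for every `k ≥ 0` the map induced by `N^k` gives an
isomorphism `Gr^W_k V → Gr^W_{-k} V` (injectivity `grInj` and surjectivity
`grSurj` are stated at the level of submodules).  This is the monodromy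
filtration of `N` centered at `0`. -/
structure IsMonodromyFiltration {K V : Type*} [Field K] [AddCommGroup V] [Module K V]
    (N : V →ₗ[K] V) (W : ℤ → Submodule K V) : Prop where
  mono : Monotone W
  exhaustive : ∃ a : ℤ, W a = ⊤
  separated : ∃ b : ℤ, W b = ⊥
  mapN : ∀ k : ℤ, (W k).map N ≤ W (k - 2)
  grInj : ∀ k : ℤ, 0 ≤ k → ∀ x ∈ W k, (N ^ k.toNat) x ∈ W (-k - 1) → x ∈ W (k - 1)
  grSurj : ∀ k : ℤ, 0 ≤ k → W (-k) ≤ (W k).map (N ^ k.toNat) ⊔ W (-k - 1)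

theorem Monotone.eq_top_of_succ_le {α : Type*} [PartialOrder α] [OrderTop α] {f : ℤ → α}
    (hf : Monotone f) {a n : ℤ} (ha : f a = ⊤) (hstep : ∀ k, n ≤ k → f (k + 1) ≤ f k) :
    ∀ k, n ≤ k → f k = ⊤ := by
  intro k hk
  refine Int.leInductionDown (motive := fun j _ => n ≤ j → f j = ⊤)
    (fun _ => top_unique (ha ▸ hf (le_max_left a k))) (fun j _ ih hj => top_unique ?_) k
    (le_max_right a k) hk
  calc ⊤ = f j := (ih (by omega)).symm
    _ ≤ f (j - 1) := by simpa using hstep (j - 1) hj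

theorem Monotone.eq_bot_of_le_pred {α : Type*} [PartialOrder α] [OrderBot α] {f : ℤ → α}
    (hf : Monotone f) {b n : ℤ} (hb : f b = ⊥) (hstep : ∀ k, k ≤ n → f k ≤ f (k - 1)) :
    ∀ k, k ≤ n → f k = ⊥ := by
  intro k hk
  refine Int.leInduction (motive := fun j _ => j ≤ n → f j = ⊥)
    (fun _ => bot_unique (hb ▸ hf (min_le_left b k))) (fun j _ ih hj => bot_unique ?_) k
    (min_le_right b k) hk
  calc f (j + 1) ≤ f j := by simpa using hstep (j + 1) hj
    _ = ⊥ := ih (by omega)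

namespace IsMonodromyFiltration

variable {K V : Type*} [Field K] [AddCommGroup V] [Module K V] {N : V →ₗ[K] V}
  {W W' : ℤ → Submodule K V}

theorem grInj_nat (hW : IsMonodromyFiltration N W) (k : ℕ) {x : V} (hx : x ∈ W k)
    (hNx : (N ^ k) x ∈ W (-k - 1)) : x ∈ W (k - 1) := by
  simpa using hW.grInj k k.cast_nonneg x hx (by simpa using hNx)

theorem grSurj_nat (hW : IsMonodromyFiltration N W) (k : ℕ) :
    W (-k) ≤ (W k).map (N ^ k) ⊔ W (-k - 1) := by
  simpa using hW.grSurj k k.cast_nonneg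

theorem pow_apply_mem (hW : IsMonodromyFiltration N W) (j : ℕ) {k : ℤ} {x : V} (hx : x ∈ W k) :
    (N ^ j) x ∈ W (k - 2 * j) := by
  induction j generalizing k x with
  | zero => simpa using hx
  | succ j ih =>
    rw [pow_succ, Module.End.mul_apply]
    convert ih (hW.mapN k (mem_map_of_mem hx)) using 2
    push_cast
    ring

theorem eq_top_of_pow_eq_zero (hW : IsMonodromyFiltration N W) {n : ℕ} (hn : N ^ n = 0) :
    ∀ k : ℤ, n ≤ k → W k = ⊤ := by
  obtain ⟨a, ha⟩ := hW.exhaustive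
  refine hW.mono.eq_top_of_succ_le ha fun k hk x hx => ?_
  have hNx : (N ^ (k + 1).toNat) x = 0 := by
    rw [pow_eq_zero_of_le (by omega) hn, LinearMap.zero_apply]
  simpa using hW.grInj (k + 1) (by omega) x hx (hNx ▸ zero_mem _)

theorem eq_bot_of_pow_eq_zero (hW : IsMonodromyFiltration N W) {n : ℕ} (hn : N ^ n = 0) :
    ∀ k : ℤ, k ≤ -n → W k = ⊥ := by
  obtain ⟨b, hb⟩ := hW.separated
  refine hW.mono.eq_bot_of_le_pred hb fun k hk => ?_
  have hsurj := hW.grSurj (-k) (by omega)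
  rwa [pow_eq_zero_of_le (by omega) hn, Submodule.map_zero, bot_sup_eq, neg_neg] at hsurj

theorem le_of_le_succ_of_le_neg_sub_two (hW : IsMonodromyFiltration N W)
    (hW' : IsMonodromyFiltration N W') (m : ℕ) (hsucc : W (m + 1) ≤ W' (m + 1))
    (hneg : W (-m - 2) ≤ W' (-m - 2)) : W m ≤ W' m := by
  intro x hx
  have hNx : (N ^ (m + 1)) x ∈ W' (-↑(m + 1) - 1) := by
    have hmem := hW.pow_apply_mem (m + 1) hx
    rw [show (m : ℤ) - 2 * ↑(m + 1) = -m - 2 by push_cast; ring] at hmem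
    convert hneg hmem using 2
    push_cast
    ring
  simpa using hW'.grInj_nat (m + 1) (by simpa using hsucc (hW.mono (by omega) hx)) hNx

theorem le_neg_of_le_of_le_neg_sub_one (hW : IsMonodromyFiltration N W)
    (hW' : IsMonodromyFiltration N W') (m : ℕ) (hpos : W m ≤ W' m)
    (hneg : W (-m - 1) ≤ W' (-m - 1)) : W (-m) ≤ W' (-m) := by
  intro x hx
  obtain ⟨_, ⟨y, hy, rfl⟩, z, hz, rfl⟩ := mem_sup.mp (hW.grSurj_nat m hx)
  refine add_mem ?_ (hW'.mono (by omega) (hneg hz))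
  simpa [two_mul] using hW'.pow_apply_mem m (hpos hy)

theorem le_of_forall_natAbs_succ_le (hW : IsMonodromyFiltration N W)
    (hW' : IsMonodromyFiltration N W') {m : ℕ}
    (h : ∀ j : ℤ, m + 1 ≤ j.natAbs → W j ≤ W' j) :
    ∀ j : ℤ, m ≤ j.natAbs → W j ≤ W' j := by
  have hpos : W m ≤ W' m :=
    hW.le_of_le_succ_of_le_neg_sub_two hW' m (h _ (by omega)) (h _ (by omega))
  intro j hj
  by_cases hj' : m + 1 ≤ j.natAbs
  · exact h j hj'
  obtain rfl | rfl : j = m ∨ j = -m := by omega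
  · exact hpos
  · exact hW.le_neg_of_le_of_le_neg_sub_one hW' m hpos (h _ (by omega))

theorem le_of_pow_eq_zero (hW : IsMonodromyFiltration N W) (hW' : IsMonodromyFiltration N W')
    {n : ℕ} (hn : N ^ n = 0) (k : ℤ) : W k ≤ W' k := by
  have houter : ∀ j : ℤ, n ≤ j.natAbs → W j ≤ W' j := fun j hj => by
    obtain hj | hj : n ≤ j ∨ j ≤ -n := by omega
    · exact (hW'.eq_top_of_pow_eq_zero hn j hj).symm ▸ le_top
    · exact (hW.eq_bot_of_pow_eq_zero hn j hj).symm ▸ bot_le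
  exact Nat.decreasingInduction (motive := fun m _ => ∀ j : ℤ, m ≤ j.natAbs → W j ≤ W' j)
    (fun _ _ => hW.le_of_forall_natAbs_succ_le hW') houter n.zero_le k k.natAbs.zero_le

end IsMonodromyFiltration

theorem monodromy_filtration_unique_general {K V : Type*} [Field K] [AddCommGroup V] [Module K V]
    (N : V →ₗ[K] V) (hN : IsNilpotent N)
    (W W' : ℤ → Submodule K V)
    (hW : IsMonodromyFiltration N W) (hW' : IsMonodromyFiltration N W') :
    ∀ k : ℤ, W k = W' k := by
  obtain ⟨n, hn⟩ := hN
  exact fun k => le_antisymm (hW.le_of_pow_eq_zero hW' hn k) (hW'.le_of_pow_eq_zero hW hn k)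

/-- the monodromy filtration of a nilpotent endomorphism is unique. -/
theorem monodromy_filtration_unique {K V : Type*} [Field K] [AddCommGroup V] [Module K V]
    [FiniteDimensional K V] (N : V →ₗ[K] V) (hN : IsNilpotent N)
    (W W' : ℤ → Submodule K V)
    (hW : IsMonodromyFiltration N W) (hW' : IsMonodromyFiltration N W') :
    ∀ k : ℤ, W k = W' k :=
  monodromy_filtration_unique_general N hN W W' hW hW'
end

section
/- Let V, V' be finite-dimensional vector spaces with nilpotent endomorphisms N, N', and let f : V → V' be a linear map with f ∘ N = N' ∘ f. Then f maps the monodromy filtration of N into that of N': f(W_k(N)) ⊆ W_k(N') for all k. -/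
open Submodule

/-! Put `P k : (W k).map f ≤ W' k`. Both filtrations are trivial far out, so `P n` and `P (-n - 1)`
hold for large `n`, and one descends in `n ≥ 0`. Passing from `n` to `n - 1` on the positive side is
the injectivity of `N'^n : Gr_n → Gr_{-n}` for `W'`; on the negative side it is the surjectivity of
`N^n : Gr_n → Gr_{-n}` for `W`, which writes `W (-n)` as `N^n (W n) + W (-n - 1)`. -/

namespace IsMonodromyFiltration

variable {K V V' : Type*} [Field K] [AddCommGroup V] [Module K V] [AddCommGroup V'] [Module K V']
  {N : V →ₗ[K] V} {N' : V' →ₗ[K] V'} {W : ℤ → Submodule K V} {W' : ℤ → Submodule K V'}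

theorem map_pow_le (hW : IsMonodromyFiltration N W) (m : ℕ) (k : ℤ) :
    (W k).map (N ^ m) ≤ W (k - 2 * m) := by
  induction m with
  | zero => simp [Module.End.one_eq_id]
  | succ m ih =>
    rw [pow_succ', Module.End.mul_eq_comp, map_comp]
    calc ((W k).map (N ^ m)).map N ≤ (W (k - 2 * m)).map N := map_mono ih
      _ ≤ W (k - 2 * m - 2) := hW.mapN _
      _ = W (k - 2 * ↑(m + 1)) := by push_cast; ring_nf

theorem map_pow_toNat_le (hW : IsMonodromyFiltration N W) {n : ℤ} (hn : 0 ≤ n) (k : ℤ) :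
    (W k).map (N ^ n.toNat) ≤ W (k - 2 * n) := by
  simpa [Int.toNat_of_nonneg hn] using hW.map_pow_le n.toNat k

theorem eventually_eq_top (hW : IsMonodromyFiltration N W) : ∃ a, ∀ k, a ≤ k → W k = ⊤ := by
  obtain ⟨a, ha⟩ := hW.exhaustive
  exact ⟨a, fun k hk => eq_top_iff.mpr (ha ▸ hW.mono hk)⟩

theorem eventually_eq_bot (hW : IsMonodromyFiltration N W) : ∃ b, ∀ k, k ≤ b → W k = ⊥ := by
  obtain ⟨b, hb⟩ := hW.separated
  exact ⟨b, fun k hk => le_bot_iff.mp (hb ▸ hW.mono hk)⟩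

variable {f : V →ₗ[K] V'}

theorem map_le_sub_one_of_map_le (hW : IsMonodromyFiltration N W) (hW' : IsMonodromyFiltration N' W')
    (hf : f ∘ₗ N = N' ∘ₗ f) {n : ℤ} (hn : 0 ≤ n) (hpos : (W n).map f ≤ W' n)
    (hneg : (W (-n - 1)).map f ≤ W' (-n - 1)) : (W (n - 1)).map f ≤ W' (n - 1) := by
  rintro _ ⟨x, hx, rfl⟩
  have hfx : f x ∈ W' n := hpos (mem_map_of_mem (hW.mono (by omega) hx))
  have hNx : (N ^ n.toNat) x ∈ W (-n - 1) := by
    have := hW.map_pow_toNat_le hn (n - 1) (mem_map_of_mem hx)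
    rwa [show n - 1 - 2 * n = -n - 1 by ring] at this
  refine hW'.grInj n hn (f x) hfx ?_
  rw [← LinearMap.comp_apply, Module.End.commute_pow_left_of_commute hf.symm]
  exact hneg (mem_map_of_mem hNx)

theorem map_neg_le_of_map_le (hW : IsMonodromyFiltration N W) (hW' : IsMonodromyFiltration N' W')
    (hf : f ∘ₗ N = N' ∘ₗ f) {n : ℤ} (hn : 0 ≤ n) (hpos : (W n).map f ≤ W' n)
    (hneg : (W (-n - 1)).map f ≤ W' (-n - 1)) : (W (-n)).map f ≤ W' (-n) :=
  calc (W (-n)).map f ≤ ((W n).map (N ^ n.toNat) ⊔ W (-n - 1)).map f := map_mono (hW.grSurj n hn)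
    _ = ((W n).map f).map (N' ^ n.toNat) ⊔ (W (-n - 1)).map f := by
      rw [Submodule.map_sup, ← map_comp, ← map_comp, Module.End.commute_pow_left_of_commute hf.symm]
    _ ≤ (W' n).map (N' ^ n.toNat) ⊔ W' (-n - 1) := sup_le_sup (map_mono hpos) hneg
    _ ≤ W' (-n) := sup_le (by simpa [two_mul] using hW'.map_pow_toNat_le hn n) (hW'.mono (by omega))

end IsMonodromyFiltration

theorem monodromy_filtration_functorial_general {K V V' : Type*} [Field K]
    [AddCommGroup V] [Module K V] [AddCommGroup V'] [Module K V']
    (N : V →ₗ[K] V) (N' : V' →ₗ[K] V')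
    (f : V →ₗ[K] V') (hf : f ∘ₗ N = N' ∘ₗ f)
    (W : ℤ → Submodule K V) (W' : ℤ → Submodule K V')
    (hW : IsMonodromyFiltration N W) (hW' : IsMonodromyFiltration N' W') :
    ∀ k : ℤ, (W k).map f ≤ W' k := by
  obtain ⟨a, ha⟩ := hW'.eventually_eq_top
  obtain ⟨b, hb⟩ := hW.eventually_eq_bot
  have hfar : ∀ n, max a (-b - 1) ≤ n → (W n).map f ≤ W' n ∧ (W (-n - 1)).map f ≤ W' (-n - 1) :=
    fun n hn => ⟨by simp [ha n (le_of_max_le_left hn)],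
      by simp [hb (-n - 1) (by have := le_of_max_le_right hn; omega)]⟩
  have hpair : ∀ n, 0 ≤ n → (W n).map f ≤ W' n ∧ (W (-n - 1)).map f ≤ W' (-n - 1) := by
    intro n hn
    rcases le_total n (max a (-b - 1)) with hnM | hMn
    · induction n, hnM using Int.leInductionDown with
      | base => exact hfar _ le_rfl
      | pred n _ ih =>
        obtain ⟨hpos, hneg⟩ := ih (by omega)
        refine ⟨hW.map_le_sub_one_of_map_le hW' hf (by omega) hpos hneg, ?_⟩
        rw [show -(n - 1) - 1 = -n by ring]
        exact hW.map_neg_le_of_map_le hW' hf (by omega) hpos hneg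
    · exact hfar n hMn
  intro k
  rcases le_or_gt 0 k with hk | hk
  · exact (hpair k hk).1
  · simpa using (hpair (-k - 1) (by omega)).2

/-- a linear map commuting with the nilpotent endomorphisms maps the
monodromy filtration of `N` into that of `N'`. -/
theorem monodromy_filtration_functorial {K V V' : Type*} [Field K]
    [AddCommGroup V] [Module K V] [AddCommGroup V'] [Module K V']
    [FiniteDimensional K V] [FiniteDimensional K V']
    (N : V →ₗ[K] V) (N' : V' →ₗ[K] V') (hN : IsNilpotent N) (hN' : IsNilpotent N')
    (f : V →ₗ[K] V') (hf : f ∘ₗ N = N' ∘ₗ f)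
    (W : ℤ → Submodule K V) (W' : ℤ → Submodule K V')
    (hW : IsMonodromyFiltration N W) (hW' : IsMonodromyFiltration N' W') :
    ∀ k : ℤ, (W k).map f ≤ W' k :=
  monodromy_filtration_functorial_general N N' f hf W W' hW hW'
end

section
/- Let N be a nilpotent endomorphism of a finite-dimensional vector space V over a field, and let N^T : V* → V* be its transpose on the dual space. Then the monodromy filtration of N^T centered at 0 is given by W_k(N^T) = (W_{-k-1}(N))^⊥, the annihilator in V* of W_{-k-1}(N). -/
open Submodule

/-! Taking annihilators turns `⊔` into `⊓` and images under a map into preimages under its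
transpose; over a field it also turns `⊓` into `⊔` and preimages into images. So the
surjectivity of `N^k : Gr^W_k → Gr^W_{-k}` dualizes to the injectivity condition for `N^T`, and
the injectivity dualizes to the surjectivity condition, with the reindexing `k ↦ -k - 1`. -/

theorem LinearMap.dualMap_pow {R M : Type*} [CommSemiring R] [AddCommMonoid M] [Module R M]
    (f : M →ₗ[R] M) (n : ℕ) : f.dualMap ^ n = (f ^ n).dualMap := by
  induction n with
  | zero => rfl
  | succ n ih => rw [pow_succ, ih, pow_succ']; rfl

theorem Submodule.dualAnnihilator_map_eq_comap_dualMap {R M₁ M₂ : Type*} [CommSemiring R]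
    [AddCommMonoid M₁] [Module R M₁] [AddCommMonoid M₂] [Module R M₂]
    (f : M₁ →ₗ[R] M₂) (A : Submodule R M₁) :
    (A.map f).dualAnnihilator = A.dualAnnihilator.comap f.dualMap := by
  ext φ
  simp [mem_dualAnnihilator]

theorem Subspace.dualAnnihilator_comap_eq_map_dualMap {K V₁ V₂ : Type*} [Field K]
    [AddCommGroup V₁] [Module K V₁] [AddCommGroup V₂] [Module K V₂]
    (f : V₁ →ₗ[K] V₂) (B : Subspace K V₂) :
    (B.comap f).dualAnnihilator = B.dualAnnihilator.map f.dualMap := by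
  rw [← range_dualMap_mkQ_eq B, ← LinearMap.range_comp, LinearMap.dualMap_comp_dualMap,
    LinearMap.range_dualMap_eq_dualAnnihilator_ker, LinearMap.ker_comp, ker_mkQ]

theorem monodromy_filtration_dual_general {K V : Type*} [Field K] [AddCommGroup V] [Module K V]
    (N : V →ₗ[K] V)
    (W : ℤ → Submodule K V) (hW : IsMonodromyFiltration N W) :
    IsMonodromyFiltration (N.dualMap) (fun k : ℤ => (W (-k - 1)).dualAnnihilator) :=
  { mono _ _ hab := dualAnnihilator_anti (hW.mono (by omega))
    exhaustive := by
      obtain ⟨b, hb⟩ := hW.separated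
      exact ⟨-b - 1, by simp [hb]⟩
    separated := by
      obtain ⟨a, ha⟩ := hW.exhaustive
      exact ⟨-a - 1, by simp [ha]⟩
    mapN k := by
      refine (dualAnnihilator_map_dualMap_le _ _).trans (dualAnnihilator_anti ?_)
      refine map_le_iff_le_comap.mp ?_
      simpa only [show -(k - 2) - 1 - 2 = -k - 1 by ring] using hW.mapN (-(k - 2) - 1)
    grInj k hk φ hφ hNφ := by
      rw [LinearMap.dualMap_pow] at hNφ
      have hφ_sup : φ ∈ ((W k).map (N ^ k.toNat) ⊔ W (-k - 1)).dualAnnihilator := by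
        rw [dualAnnihilator_sup_eq, dualAnnihilator_map_eq_comap_dualMap]
        exact ⟨by simpa using hNφ, hφ⟩
      simpa using dualAnnihilator_anti (hW.grSurj k hk) hφ_sup
    grSurj k hk := by
      have hinj : W k ⊓ (W (-k - 1)).comap (N ^ k.toNat) ≤ W (k - 1) :=
        fun x ⟨hx, hNx⟩ => hW.grInj k hk x hx hNx
      simpa [LinearMap.dualMap_pow, Subspace.dualAnnihilator_inf_eq,
        Subspace.dualAnnihilator_comap_eq_map_dualMap, sup_comm] using dualAnnihilator_anti hinj }

/-- the monodromy filtration of the transpose `N^T` on the dual space is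
given by the annihilators `W_k(N^T) = (W_{-k-1}(N))^⊥`. -/
theorem monodromy_filtration_dual {K V : Type*} [Field K] [AddCommGroup V] [Module K V]
    [FiniteDimensional K V] (N : V →ₗ[K] V) (hN : IsNilpotent N)
    (W : ℤ → Submodule K V) (hW : IsMonodromyFiltration N W) :
    IsMonodromyFiltration (N.dualMap) (fun k : ℤ => (W (-k - 1)).dualAnnihilator) :=
  monodromy_filtration_dual_general N W hW
end

section
/- Let V be a finite-dimensional vector space with a finite increasing filtration L_• and a nilpotent endomorphism N satisfying N(L_k) ⊆ L_k for all k. If W_• and W'_• are both relative monodromy filtrations of N with respect to L, then W_k = W'_k for all k. That is, the relative monodromy filtration is unique if it exists. -/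
open Submodule

/-- `W` is a relative monodromy filtration of `N` with respect to `L`:
`N (W k) ⊆ W (k-2)` and, for every `l` and every `k ≥ 0`, the map induced by `N^k`
is an isomorphism `Gr^W_{l+k} Gr^L_l V ≅ Gr^W_{l-k} Gr^L_l V`, where the double graded
piece `Gr^W_m Gr^L_l V` is `(W m ⊓ L l + L (l-1)) / (W (m-1) ⊓ L l + L (l-1))`;
injectivity `grInj` and surjectivity `grSurj` are stated at the level of submodules. -/
structure IsRelMonodromyFiltration {K V : Type*} [Field K] [AddCommGroup V] [Module K V]
    (N : V →ₗ[K] V) (L : ℤ → Submodule K V) (W : ℤ → Submodule K V) : Prop where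
  mono : Monotone W
  exhaustive : ∃ a : ℤ, W a = ⊤
  separated : ∃ b : ℤ, W b = ⊥
  mapN : ∀ k : ℤ, (W k).map N ≤ W (k - 2)
  grInj : ∀ l k : ℤ, 0 ≤ k → ∀ x ∈ W (l + k) ⊓ L l,
    (N ^ k.toNat) x ∈ (W (l - k - 1) ⊓ L l) ⊔ L (l - 1) →
      x ∈ (W (l + k - 1) ⊓ L l) ⊔ L (l - 1)
  grSurj : ∀ l k : ℤ, 0 ≤ k →
    W (l - k) ⊓ L l ≤ ((W (l + k) ⊓ L l).map (N ^ k.toNat) ⊔ (W (l - k - 1) ⊓ L l)) ⊔ L (l - 1)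

/-!
We show `W ≤ W'` (and symmetrically `W' ≤ W`) by comparing `W k ∩ L l` with `W'` by induction
on `l`, starting from a level where `L l = 0`. On `L l` the defining isomorphisms sharpen to
statements that no longer work modulo `L (l-1)`:
* if `x ∈ L l ∩ W (l+t)` and `N^t x ∈ W (l-t-1)`, then `x ∈ W (l+t-1)` (induction on `l`);
* `W (l-t) ∩ L l = N^t (W (l+t) ∩ L l) + W (l-t) ∩ L (l-1)` (descending induction on `t`).
The first controls `W (l+t-1) ∩ L l` through `W (l+t) ∩ L l` and `W (l-t-1) ∩ L l`, the second
controls `W (l-t) ∩ L l` through `W (l+t) ∩ L l` and `L (l-1)`. Hence the comparison on `L l`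
follows by descending induction on the distance of `k` from `l - 1/2`, starting where `W` is `0`
and `W'` is everything.
-/

theorem pow_apply_mem_of_map_le_sub {R M : Type*} [Semiring R] [AddCommMonoid M] [Module R M]
    {N : M →ₗ[R] M} {W : ℤ → Submodule R M} {d : ℤ} (hN : ∀ k, (W k).map N ≤ W (k - d))
    (t : ℕ) {k : ℤ} {x : M} (hx : x ∈ W k) : (N ^ t) x ∈ W (k - t * d) := by
  induction t with
  | zero => simpa using hx
  | succ t ih =>
    rw [pow_succ', Module.End.mul_apply, Nat.cast_succ, add_mul, one_mul, ← sub_sub]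
    exact hN _ (mem_map_of_mem ih)

@[elab_as_elim]
theorem Int.induction_of_forall_le {motive : ℤ → Prop} (b : ℤ) (base : ∀ l ≤ b, motive l)
    (step : ∀ l, motive (l - 1) → motive l) (l : ℤ) : motive l :=
  Int.inductionOn' l b (base b le_rfl) (fun k _ hk => step (k + 1) (by rwa [add_sub_cancel_right]))
    (fun k hk _ => base _ (by omega))

namespace IsRelMonodromyFiltration

variable {K V : Type*} [Field K] [AddCommGroup V] [Module K V] {N : V →ₗ[K] V}
  {L W W' : ℤ → Submodule K V}

theorem pow_apply_mem (hW : IsRelMonodromyFiltration N L W) {t : ℕ} {i j : ℤ}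
    (hij : i ≤ j + 2 * t) {x : V} (hx : x ∈ W i) : (N ^ t) x ∈ W j :=
  hW.mono (by omega) (pow_apply_mem_of_map_le_sub hW.mapN t hx)

theorem mem_of_pow_apply_mem (hW : IsRelMonodromyFiltration N L W) (hLmono : Monotone L)
    (hLsep : ∃ b, L b = ⊥) (hNL : ∀ l, (L l).map N ≤ L l) (l : ℤ) (t : ℕ) {x : V}
    (hxL : x ∈ L l) (hxW : x ∈ W (l + t)) (hNx : (N ^ t) x ∈ W (l - t - 1)) :
    x ∈ W (l + t - 1) := by
  obtain ⟨b, hb⟩ := hLsep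
  induction l using Int.induction_of_forall_le b generalizing t x with
  | base l hl =>
    rw [eq_bot_mono (hLmono hl) hb, mem_bot] at hxL
    rw [hxL]
    exact zero_mem _
  | step l ih =>
    have hgr := hW.grInj l t t.cast_nonneg x ⟨hxW, hxL⟩ <| by
      rw [Int.toNat_natCast]
      exact mem_sup_left ⟨hNx, Module.End.pow_apply_mem_of_forall_mem t
        (fun y hy => hNL l (mem_map_of_mem hy)) x hxL⟩
    obtain ⟨w, hw, v, hvL, rfl⟩ := mem_sup.1 hgr
    have hvW : v ∈ W (l + t) := (Submodule.add_mem_iff_right _ (hW.mono (by omega) hw.1)).1 hxW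
    have hNv : (N ^ (t + 1)) v ∈ W (l - t - 3) := by
      have hNv_eq : (N ^ (t + 1)) v = N ((N ^ t) (w + v)) - (N ^ (t + 1)) w := by
        simp only [pow_succ', Module.End.mul_apply, map_add]
        abel
      rw [hNv_eq]
      exact sub_mem (hW.mono (by omega) (hW.mapN _ (mem_map_of_mem hNx)))
        (hW.pow_apply_mem (by omega) hw.1)
    have hv := ih (t + 1) hvL (hW.mono (by omega) hvW) (hW.mono (by omega) hNv)
    exact add_mem hw.1 (hW.mono (by omega) hv)

theorem inf_le_map_pow_sup (hW : IsRelMonodromyFiltration N L W) (hNL : ∀ l, (L l).map N ≤ L l)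
    (l : ℤ) (t : ℕ) :
    W (l - t) ⊓ L l ≤ (W (l + t) ⊓ L l).map (N ^ t) ⊔ W (l - t) ⊓ L (l - 1) := by
  obtain ⟨b, hb⟩ := hW.separated
  induction t using Nat.strong_decreasing_induction with
  | base =>
    refine ⟨(l - b).toNat, fun t ht => ?_⟩
    rw [eq_bot_mono (hW.mono (show l - t ≤ b by omega)) hb, bot_inf_eq]
    exact bot_le
  | step t ih =>
    intro x hx
    have hsurj := hW.grSurj l t t.cast_nonneg hx
    rw [Int.toNat_natCast] at hsurj
    obtain ⟨y, hy, c, hcL, rfl⟩ := mem_sup.1 hsurj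
    obtain ⟨a, ha, z, hz, rfl⟩ := mem_sup.1 hy
    obtain ⟨u, hu, rfl⟩ := mem_map.1 ha
    obtain ⟨a', ha', z', hz', rfl⟩ :=
      mem_sup.1 (ih (t + 1) (by omega) ⟨hW.mono (by omega) hz.1, hz.2⟩)
    obtain ⟨u', hu', rfl⟩ := mem_map.1 ha'
    obtain ⟨hz'W, hz'L⟩ := mem_inf.1 hz'
    have hNu' : N u' ∈ W (l + t) ⊓ L l :=
      ⟨hW.mono (by omega) (hW.mapN _ (mem_map_of_mem hu'.1)), hNL l (mem_map_of_mem hu'.2)⟩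
    have hc : c ∈ W (l - t) := by
      refine (Submodule.add_mem_iff_right _ (add_mem ?_ (add_mem ?_ ?_))).1 hx.1
      exacts [hW.pow_apply_mem (by omega) hu.1, hW.pow_apply_mem (by omega) hu'.1,
        hW.mono (by omega) hz'W]
    have hx_eq : (N ^ t) u + ((N ^ (t + 1)) u' + z') + c = (N ^ t) (u + N u') + (z' + c) := by
      rw [pow_succ, Module.End.mul_apply, map_add]
      abel
    rw [hx_eq]
    exact add_mem (mem_sup_left (mem_map_of_mem (add_mem hu hNu')))
      (mem_sup_right (add_mem ⟨hW.mono (by omega) hz'W, hz'L⟩ ⟨hc, hcL⟩))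

theorem inf_le_of_inf_pred_le (hW : IsRelMonodromyFiltration N L W)
    (hW' : IsRelMonodromyFiltration N L W') (hLmono : Monotone L) (hLsep : ∃ b, L b = ⊥)
    (hNL : ∀ l, (L l).map N ≤ L l) (l : ℤ) (hpred : ∀ k, W k ⊓ L (l - 1) ≤ W' k) (k : ℤ) :
    W k ⊓ L l ≤ W' k := by
  obtain ⟨a, ha⟩ := hW'.exhaustive
  obtain ⟨b, hb⟩ := hW.separated
  have hdist (t : ℕ) : W (l + t - 1) ⊓ L l ≤ W' (l + t - 1) ∧ W (l - t) ⊓ L l ≤ W' (l - t) := by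
    induction t using Nat.strong_decreasing_induction with
    | base =>
      refine ⟨(a - l).toNat + (l - b).toNat, fun t ht => ⟨?_, ?_⟩⟩
      · rw [eq_top_mono (hW'.mono (show a ≤ l + t - 1 by omega)) ha]
        exact le_top
      · rw [eq_bot_mono (hW.mono (show l - t ≤ b by omega)) hb, bot_inf_eq]
        exact bot_le
    | step t ih =>
      obtain ⟨hup, hlow⟩ := ih (t + 1) (by omega)
      constructor
      · intro x hx
        have hxW' : x ∈ W' (l + t) :=
          hW'.mono (by omega) (hup ⟨hW.mono (by omega) hx.1, hx.2⟩)
        have hNx : (N ^ t) x ∈ W' (l - t - 1) := by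
          refine hW'.mono (by omega) (hlow ⟨hW.pow_apply_mem (by omega) hx.1, ?_⟩)
          exact Module.End.pow_apply_mem_of_forall_mem t
            (fun y hy => hNL l (mem_map_of_mem hy)) x hx.2
        exact hW'.mem_of_pow_apply_mem hLmono hLsep hNL l t hx.2 hxW' hNx
      · intro x hx
        obtain ⟨y, hy, z, hz, rfl⟩ := mem_sup.1 (hW.inf_le_map_pow_sup hNL l t hx)
        obtain ⟨u, hu, rfl⟩ := mem_map.1 hy
        have hu' := hup ⟨hW.mono (by omega) hu.1, hu.2⟩
        exact add_mem (hW'.pow_apply_mem (by omega) hu') (hpred _ hz)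
  obtain ⟨t, rfl | rfl⟩ : ∃ t : ℕ, k = l + t - 1 ∨ k = l - t := by
    rcases le_or_gt l k with h | h
    · exact ⟨(k - l + 1).toNat, Or.inl (by omega)⟩
    · exact ⟨(l - k).toNat, Or.inr (by omega)⟩
  exacts [(hdist t).1, (hdist t).2]

protected theorem le (hW : IsRelMonodromyFiltration N L W) (hW' : IsRelMonodromyFiltration N L W')
    (hLmono : Monotone L) (hLex : ∃ a, L a = ⊤) (hLsep : ∃ b, L b = ⊥)
    (hNL : ∀ l, (L l).map N ≤ L l) : W ≤ W' := by
  obtain ⟨a, ha⟩ := hLex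
  obtain ⟨b, hb⟩ := hLsep
  have hinf (l k : ℤ) : W k ⊓ L l ≤ W' k := by
    induction l using Int.induction_of_forall_le b generalizing k with
    | base l hl =>
      rw [eq_bot_mono (hLmono hl) hb, inf_bot_eq]
      exact bot_le
    | step l ih => exact inf_le_of_inf_pred_le hW hW' hLmono ⟨b, hb⟩ hNL l ih k
  intro k
  simpa [ha] using hinf a k

end IsRelMonodromyFiltration

theorem rel_monodromy_filtration_unique_general {K V : Type*} [Field K] [AddCommGroup V] [Module K V]
    (N : V →ₗ[K] V)
    (L : ℤ → Submodule K V) (hLmono : Monotone L)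
    (hLex : ∃ a : ℤ, L a = ⊤) (hLsep : ∃ b : ℤ, L b = ⊥)
    (hNL : ∀ l : ℤ, (L l).map N ≤ L l)
    (W W' : ℤ → Submodule K V)
    (hW : IsRelMonodromyFiltration N L W) (hW' : IsRelMonodromyFiltration N L W') :
    ∀ k : ℤ, W k = W' k :=
  congrFun <| le_antisymm (hW.le hW' hLmono hLex hLsep hNL) (hW'.le hW hLmono hLex hLsep hNL)

/-- the relative monodromy filtration of `N` with respect to a finite
increasing filtration `L` preserved by `N` is unique if it exists. -/
theorem rel_monodromy_filtration_unique {K V : Type*} [Field K] [AddCommGroup V] [Module K V]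
    [FiniteDimensional K V] (N : V →ₗ[K] V) (hN : IsNilpotent N)
    (L : ℤ → Submodule K V) (hLmono : Monotone L)
    (hLex : ∃ a : ℤ, L a = ⊤) (hLsep : ∃ b : ℤ, L b = ⊥)
    (hNL : ∀ l : ℤ, (L l).map N ≤ L l)
    (W W' : ℤ → Submodule K V)
    (hW : IsRelMonodromyFiltration N L W) (hW' : IsRelMonodromyFiltration N L W') :
    ∀ k : ℤ, W k = W' k :=
  rel_monodromy_filtration_unique_general N L hLmono hLex hLsep hNL W W' hW hW'
end

section
/- Let M be a module over a ring and let A_1 ⊆ A_2 ⊆ … ⊆ A_m and B_1 ⊆ B_2 ⊆ … ⊆ B_n be two chains of submodules of M. Then the sublattice of the lattice of submodules of M generated by {A_1,…,A_m, B_1,…,B_n} is distributive. In particular, for any i, j, k one has A_i ∩ (B_j + B_k ∩ A_l) = A_i ∩ B_j + A_i ∩ B_k ∩ A_l, and any two filtrations on a module are compatible. -/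
/-!
Adjoin `⊤` to both chains `C` and `D`. Every element of the generated sublattice is then a finite
join `⨆ᵢ cᵢ ⊓ dᵢ` with `cᵢ ∈ C`, `dᵢ ∈ D`, because in a modular lattice such joins multiply out:
`(⨆ᵢ cᵢ ⊓ dᵢ) ⊓ (⨆ⱼ c'ⱼ ⊓ d'ⱼ) = ⨆ᵢⱼ (cᵢ ⊓ c'ⱼ) ⊓ (dᵢ ⊓ d'ⱼ)`. Distributivity follows at once
from this expansion.

The expansion is proved by induction on the number of terms. The meet lies below `a`, the smaller
of the two largest `C`-components, and meeting each join with `a` replaces every `cᵢ` by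
`a ⊓ cᵢ` (modular law, the `d`'s being a chain). The two terms whose `C`-component was largest
become `a ⊓ dᵢ` and `a ⊓ d'ⱼ`; the one with the smaller `d` lies below the other join, so the
modular law peels it off.
-/

open Finset
open scoped FinsetFamily

section Chain

variable {α ι : Type*}

theorem IsChain.supClosed [SemilatticeSup α] {c : Set α} (hc : IsChain (· ≤ ·) c) :
    SupClosed c := fun _ ha _ hb =>
  (hc.total ha hb).elim (fun h => (sup_eq_right.2 h).symm ▸ hb)
    (fun h => (sup_eq_left.2 h).symm ▸ ha)

theorem IsChain.infClosed [SemilatticeInf α] {c : Set α} (hc : IsChain (· ≤ ·) c) :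
    InfClosed c := fun _ ha _ hb =>
  (hc.total ha hb).elim (fun h => (inf_eq_left.2 h).symm ▸ ha)
    (fun h => (inf_eq_right.2 h).symm ▸ hb)

theorem IsChain.image_inf_left [SemilatticeInf α] {c : Set α} (hc : IsChain (· ≤ ·) c) (a : α) :
    IsChain (· ≤ ·) ((a ⊓ ·) '' c) :=
  hc.image_of_map_rel (· ≤ ·) (· ≤ ·) _ fun _ _ => inf_le_inf_left a

theorem Finset.exists_max_image_of_isChain [SemilatticeSup α] {s : Finset ι} {f : ι → α}
    (hs : s.Nonempty) (hf : IsChain (· ≤ ·) (f '' s)) : ∃ i ∈ s, ∀ j ∈ s, f j ≤ f i := by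
  obtain ⟨i, hi, hfi⟩ := s.sup'_mem _ hf.supClosed hs f fun i hi => Set.mem_image_of_mem f hi
  exact ⟨i, hi, fun j hj => hfi ▸ le_sup' f hj⟩

end Chain

section SupsOfInfs

variable {L : Type*} [Lattice L] [OrderBot L]

def supsOfInfs (C D : Set L) : Set L :=
  {x | ∃ s : Finset (L × L), ↑s ⊆ C ×ˢ D ∧ s.sup (Prod.fst ⊓ Prod.snd) = x}

theorem subset_supsOfInfs_insert_top [OrderTop L] {C D : Set L} :
    C ∪ D ⊆ supsOfInfs (insert ⊤ C) (insert ⊤ D) := by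
  rintro x (hx | hx)
  · exact ⟨{(x, ⊤)}, by simp [hx], by simp⟩
  · exact ⟨{(⊤, x)}, by simp [hx], by simp⟩

end SupsOfInfs

section Modular

variable {L ι : Type*} [Lattice L] [IsModularLattice L] [OrderBot L]

theorem Finset.sup_inf_distrib_left_of_isChain {s : Finset ι} {u v : ι → L} {a : L}
    (ha : ∀ i ∈ s, a ≤ u i ∨ u i ≤ a) (hv : IsChain (· ≤ ·) (v '' s)) :
    a ⊓ s.sup (u ⊓ v) = s.sup fun i => a ⊓ u i ⊓ v i := by
  classical
  refine le_antisymm ?_ <| Finset.sup_le fun i hi =>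
    le_inf (inf_le_left.trans inf_le_left) ((inf_le_inf_right _ inf_le_right).trans
      (le_sup (f := u ⊓ v) hi))
  -- Terms with `u i ≤ a` leave the meet by the modular law; the rest lie below `a ⊓ v i₁`
  -- for the index `i₁` of the largest `v` among them.
  set s₁ := s.filter (a ≤ u ·)
  set s₂ := s.filter (¬ a ≤ u ·)
  have hu₂ : ∀ i ∈ s₂, u i ≤ a := fun i hi =>
    (ha i (mem_filter.1 hi).1).resolve_left (mem_filter.1 hi).2
  have hsup₂ : s₂.sup (u ⊓ v) ≤ a := Finset.sup_le fun i hi => inf_le_left.trans (hu₂ i hi)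
  have hsup₁ : a ⊓ s₁.sup (u ⊓ v) ≤ s₁.sup fun i => a ⊓ u i ⊓ v i := by
    rcases s₁.eq_empty_or_nonempty with h | hne
    · simp [h]
    obtain ⟨i₁, hi₁, hmax⟩ := exists_max_image_of_isChain hne
      (hv.mono (Set.image_mono (filter_subset _ s)))
    calc a ⊓ s₁.sup (u ⊓ v) ≤ a ⊓ u i₁ ⊓ v i₁ := by
          rw [inf_eq_left.2 (mem_filter.1 hi₁).2]
          exact inf_le_inf_left a (Finset.sup_le fun j hj => inf_le_right.trans (hmax j hj))
      _ ≤ _ := le_sup (f := fun i => a ⊓ u i ⊓ v i) hi₁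
  calc a ⊓ s.sup (u ⊓ v) = s₂.sup (u ⊓ v) ⊔ a ⊓ s₁.sup (u ⊓ v) := by
        rw [← filter_union_filter_not_eq (a ≤ u ·) s, sup_union, sup_comm (s₁.sup _),
          inf_comm a, sup_inf_assoc_of_le _ hsup₂, inf_comm _ a]
    _ ≤ s₂.sup (fun i => a ⊓ u i ⊓ v i) ⊔ s₁.sup fun i => a ⊓ u i ⊓ v i := by
        refine sup_le_sup (le_of_eq (sup_congr rfl fun i hi => ?_)) hsup₁
        simp only [Pi.inf_apply, inf_eq_right.2 (hu₂ i hi)]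
    _ = s.sup fun i => a ⊓ u i ⊓ v i := by
        rw [← sup_union, union_comm, filter_union_filter_not_eq]

variable {s t : Finset ι} {u v : ι → L}

theorem inf_sup_inf_inf_sup_eq_sup_erase [DecidableEq ι] {a : L} {i₀ j₀ : ι}
    (hi₀ : i₀ ∈ s) (hj₀ : j₀ ∈ t) (hai₀ : a ≤ u i₀) (haj₀ : a ≤ u j₀) (hv₀ : v i₀ ≤ v j₀)
    (hu : IsChain (· ≤ ·) (u '' (↑s ∪ ↑t))) (ha : a ∈ u '' (↑s ∪ ↑t))
    (hv : IsChain (· ≤ ·) (v '' (↑s ∪ ↑t))) :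
    a ⊓ s.sup (u ⊓ v) ⊓ (a ⊓ t.sup (u ⊓ v)) =
      a ⊓ v i₀ ⊔ (s.erase i₀).sup (fun i => a ⊓ u i ⊓ v i) ⊓ t.sup fun i => a ⊓ u i ⊓ v i := by
  have hcomp : ∀ i ∈ (↑s ∪ ↑t : Set ι), a ≤ u i ∨ u i ≤ a := fun i hi =>
    hu.total ha (Set.mem_image_of_mem u hi)
  have hs := sup_inf_distrib_left_of_isChain (fun i hi => hcomp i (Or.inl hi))
    (hv.mono (Set.image_mono Set.subset_union_left))
  have ht := sup_inf_distrib_left_of_isChain (fun i hi => hcomp i (Or.inr hi))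
    (hv.mono (Set.image_mono Set.subset_union_right))
  have hle : a ⊓ v i₀ ≤ t.sup fun i => a ⊓ u i ⊓ v i :=
    calc a ⊓ v i₀ ≤ a ⊓ u j₀ ⊓ v j₀ := by rw [inf_eq_left.2 haj₀]; exact inf_le_inf_left a hv₀
      _ ≤ _ := le_sup (f := fun i => a ⊓ u i ⊓ v i) hj₀
  rw [hs, ht, ← insert_erase hi₀, sup_insert, inf_eq_left.2 hai₀, sup_inf_assoc_of_le _ hle,
    erase_insert (notMem_erase i₀ s)]

theorem sup_inf_sup_le_of_isChain {z : L} (hu : IsChain (· ≤ ·) (u '' (↑s ∪ ↑t)))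
    (hv : IsChain (· ≤ ·) (v '' (↑s ∪ ↑t)))
    (hz : ∀ i ∈ s, ∀ j ∈ t, u i ⊓ v i ⊓ (u j ⊓ v j) ≤ z) :
    s.sup (u ⊓ v) ⊓ t.sup (u ⊓ v) ≤ z := by
  classical
  induction hN : #s + #t using Nat.strong_induction_on generalizing s t u with
  | _ N ih =>
  rcases s.eq_empty_or_nonempty with rfl | hs
  · simp
  rcases t.eq_empty_or_nonempty with rfl | ht
  · simp
  obtain ⟨i₀, hi₀, hmax_s⟩ := exists_max_image_of_isChain hs
    (hu.mono (Set.image_mono Set.subset_union_left))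
  obtain ⟨j₀, hj₀, hmax_t⟩ := exists_max_image_of_isChain ht
    (hu.mono (Set.image_mono Set.subset_union_right))
  wlog hv₀ : v i₀ ≤ v j₀ generalizing s t i₀ j₀
  · rw [inf_comm]
    exact this (Set.union_comm (s : Set ι) t ▸ hu) (Set.union_comm (s : Set ι) t ▸ hv)
      (fun j hj i hi => inf_comm (u i ⊓ v i) _ ▸ hz i hi j hj) (by omega) ht hs j₀ hj₀ hmax_t
      i₀ hi₀ hmax_s ((hv.total (Set.mem_image_of_mem v (Or.inl hi₀))
        (Set.mem_image_of_mem v (Or.inr hj₀))).resolve_left hv₀)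
  set a := u i₀ ⊓ u j₀
  have ha : a ∈ u '' (↑s ∪ ↑t) := hu.infClosed (Set.mem_image_of_mem u (Or.inl hi₀))
    (Set.mem_image_of_mem u (Or.inr hj₀))
  have hle_a : s.sup (u ⊓ v) ⊓ t.sup (u ⊓ v) ≤ a :=
    inf_le_inf (Finset.sup_le fun i hi => inf_le_left.trans (hmax_s i hi))
      (Finset.sup_le fun j hj => inf_le_left.trans (hmax_t j hj))
  have hpeeled : a ⊓ v i₀ ≤ z :=
    (le_inf (le_inf (inf_le_left.trans inf_le_left) inf_le_right)
      (le_inf (inf_le_left.trans inf_le_right) (inf_le_right.trans hv₀))).trans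
      (hz i₀ hi₀ j₀ hj₀)
  have hrest :
      (s.erase i₀).sup (fun i => a ⊓ u i ⊓ v i) ⊓ t.sup (fun i => a ⊓ u i ⊓ v i) ≤ z := by
    have hsub : (↑(s.erase i₀) ∪ ↑t : Set ι) ⊆ ↑s ∪ ↑t :=
      Set.union_subset_union_left _ (coe_subset.2 (erase_subset _ _))
    refine ih _ (by rw [← hN]; exact Nat.add_lt_add_right (card_erase_lt_of_mem hi₀) _) ?_
      (hv.mono (Set.image_mono hsub))
      (fun i hi j hj => (inf_le_inf (inf_le_inf_right _ inf_le_right)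
        (inf_le_inf_right _ inf_le_right)).trans (hz i (mem_of_mem_erase hi) j hj)) rfl
    rw [← Set.image_image (a ⊓ ·)]
    exact (hu.mono (Set.image_mono hsub)).image_inf_left a
  calc s.sup (u ⊓ v) ⊓ t.sup (u ⊓ v)
      = a ⊓ s.sup (u ⊓ v) ⊓ (a ⊓ t.sup (u ⊓ v)) := by
        rw [inf_inf_inf_comm, inf_idem, inf_eq_right.2 hle_a]
    _ = a ⊓ v i₀ ⊔ (s.erase i₀).sup (fun i => a ⊓ u i ⊓ v i) ⊓ t.sup fun i => a ⊓ u i ⊓ v i :=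
        inf_sup_inf_inf_sup_eq_sup_erase hi₀ hj₀ inf_le_left inf_le_right hv₀ hu ha hv
    _ ≤ z := sup_le hpeeled hrest

variable {C D : Set L}

theorem sup_inf_sup_eq_sup_infs_of_isChain [DecidableEq L] (hC : IsChain (· ≤ ·) C)
    (hD : IsChain (· ≤ ·) D) {s t : Finset (L × L)} (hs : ↑s ⊆ C ×ˢ D)
    (ht : ↑t ⊆ C ×ˢ D) :
    s.sup (Prod.fst ⊓ Prod.snd) ⊓ t.sup (Prod.fst ⊓ Prod.snd) =
      (s ⊼ t).sup (Prod.fst ⊓ Prod.snd) := by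
  have hst : ↑s ∪ ↑t ⊆ C ×ˢ D := Set.union_subset hs ht
  refine le_antisymm (sup_inf_sup_le_of_isChain
    (hC.mono (Set.image_subset_iff.2 fun _ h => (hst h).1))
    (hD.mono (Set.image_subset_iff.2 fun _ h => (hst h).2))
    fun p hp q hq => (inf_inf_inf_comm _ _ _ _).le.trans
      (le_sup (f := Prod.fst ⊓ Prod.snd) (inf_mem_infs hp hq))) ?_
  simp only [Finset.sup_le_iff, forall_infs_iff]
  exact fun p hp q hq => (inf_inf_inf_comm _ _ _ _).le.trans
    (inf_le_inf (le_sup (f := Prod.fst ⊓ Prod.snd) hp) (le_sup (f := Prod.fst ⊓ Prod.snd) hq))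

theorem isSublattice_supsOfInfs (hC : IsChain (· ≤ ·) C) (hD : IsChain (· ≤ ·) D) :
    IsSublattice (supsOfInfs C D) := by
  classical
  constructor
  · rintro _ ⟨s, hs, rfl⟩ _ ⟨t, ht, rfl⟩
    exact ⟨s ∪ t, by rw [coe_union]; exact Set.union_subset hs ht, sup_union⟩
  · rintro _ ⟨s, hs, rfl⟩ _ ⟨t, ht, rfl⟩
    refine ⟨s ⊼ t, ?_, (sup_inf_sup_eq_sup_infs_of_isChain hC hD hs ht).symm⟩
    rw [coe_infs]
    rintro _ ⟨p, hp, q, hq, rfl⟩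
    exact ⟨hC.infClosed (hs hp).1 (ht hq).1, hD.infClosed (hs hp).2 (ht hq).2⟩

theorem inf_sup_left_of_mem_supsOfInfs (hC : IsChain (· ≤ ·) C) (hD : IsChain (· ≤ ·) D)
    {x y z : L} (hx : x ∈ supsOfInfs C D) (hy : y ∈ supsOfInfs C D)
    (hz : z ∈ supsOfInfs C D) : x ⊓ (y ⊔ z) = x ⊓ y ⊔ x ⊓ z := by
  classical
  obtain ⟨s, hs, rfl⟩ := hx
  obtain ⟨t, ht, rfl⟩ := hy
  obtain ⟨r, hr, rfl⟩ := hz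
  have htr : ↑(t ∪ r) ⊆ C ×ˢ D := by rw [coe_union]; exact Set.union_subset ht hr
  rw [← sup_union, sup_inf_sup_eq_sup_infs_of_isChain hC hD hs htr,
    sup_inf_sup_eq_sup_infs_of_isChain hC hD hs ht,
    sup_inf_sup_eq_sup_infs_of_isChain hC hD hs hr, infs_union_right, sup_union]

theorem inf_sup_left_of_mem_latticeClosure_union [OrderTop L] (hC : IsChain (· ≤ ·) C)
    (hD : IsChain (· ≤ ·) D) {x y z : L} (hx : x ∈ latticeClosure (C ∪ D))
    (hy : y ∈ latticeClosure (C ∪ D)) (hz : z ∈ latticeClosure (C ∪ D)) :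
    x ⊓ (y ⊔ z) = x ⊓ y ⊔ x ⊓ z := by
  have hC' := hC.insert fun b _ _ => Or.inr (le_top (a := b))
  have hD' := hD.insert fun b _ _ => Or.inr (le_top (a := b))
  have hsub :=
    latticeClosure_min subset_supsOfInfs_insert_top (isSublattice_supsOfInfs hC' hD')
  exact inf_sup_left_of_mem_supsOfInfs hC' hD' (hsub hx) (hsub hy) (hsub hz)

end Modular

/-- the sublattice of submodules of `M` generated by two chains
`A_1 ⊆ … ⊆ A_m` and `B_1 ⊆ … ⊆ B_n` is distributive; in particular
`A i ⊓ (B j ⊔ B k ⊓ A l) = A i ⊓ B j ⊔ A i ⊓ B k ⊓ A l`, so any two filtrations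
on a module are compatible. -/
theorem two_chains_generate_distributive_sublattice {R M : Type*} [Ring R]
    [AddCommGroup M] [Module R M] {m n : ℕ}
    (A : Fin m → Submodule R M) (B : Fin n → Submodule R M)
    (hA : Monotone A) (hB : Monotone B) :
    (∀ x ∈ latticeClosure (Set.range A ∪ Set.range B),
      ∀ y ∈ latticeClosure (Set.range A ∪ Set.range B),
        ∀ z ∈ latticeClosure (Set.range A ∪ Set.range B),
          x ⊓ (y ⊔ z) = x ⊓ y ⊔ x ⊓ z) ∧
    (∀ (i l : Fin m) (j k : Fin n),
      A i ⊓ (B j ⊔ B k ⊓ A l) = A i ⊓ B j ⊔ A i ⊓ (B k ⊓ A l)) := by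
  have hA_mem : ∀ i, A i ∈ latticeClosure (Set.range A ∪ Set.range B) := fun i =>
    subset_latticeClosure (Or.inl ⟨i, rfl⟩)
  have hB_mem : ∀ j, B j ∈ latticeClosure (Set.range A ∪ Set.range B) := fun j =>
    subset_latticeClosure (Or.inr ⟨j, rfl⟩)
  refine ⟨fun _ hx _ hy _ hz =>
    inf_sup_left_of_mem_latticeClosure_union hA.isChain_range hB.isChain_range hx hy hz,
    fun i l j k => ?_⟩
  exact inf_sup_left_of_mem_latticeClosure_union hA.isChain_range hB.isChain_range
    (hA_mem i) (hB_mem j) (isSublattice_latticeClosure.infClosed (hB_mem k) (hA_mem l))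
end
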